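/- Let 𝒟 be the basic Weitzenböck derivation on ℚ[x_0, …, x_m], and for each μ ∈ ℚ let φ_μ be the ℚ-algebra endomorphism of ℚ[x_0, …, x_m] determined by φ_μ(x_n) = Σ_{i=0}^{n} C(n,i) μ^{n-i} x_i. Then a polynomial f ∈ ℚ[x_0, …, x_m] satisfies φ_μ(f) = f for all μ ∈ ℚ if and only if 𝒟(f) = 0. -/

import Mathlib

/-!
Replace `μ` by a formal variable `T`: the substitution `Φ = φ_T : ℚ[x] → ℚ[x][T]` satisfies
`Φ(f)(μ) = φ_μ(f)`, `Φ(f)(0) = f` and `d/dT Φ(f) = Φ(𝒟 f)`, the last one because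
`(n - j) C(n, j) = n C(n - 1, j)`; so `Φ = exp(T𝒟)`. Hence `f` is fixed by every `φ_μ` iff
`Φ(f) - f` has infinitely many roots, i.e. `Φ(f)` is constant in `T`, iff `Φ(𝒟 f) = 0`, iff
`𝒟 f = 0`.
-/

open MvPolynomial

/-- The μ-binomial substitution: the ℚ-algebra endomorphism of `ℚ[x_0, …, x_m]`
sending `x_n` to `∑_{i=0}^{n} C(n,i) μ^{n-i} x_i`. -/
noncomputable def binomialSubst (m : ℕ) (μ : ℚ) :
    MvPolynomial (Fin (m + 1)) ℚ →ₐ[ℚ] MvPolynomial (Fin (m + 1)) ℚ :=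
  aeval fun v : Fin (m + 1) =>
    ∑ i ∈ (Finset.range ((v : ℕ) + 1)).attach,
      (((v : ℕ).choose i.1 : ℚ) * μ ^ ((v : ℕ) - i.1)) •
        X (⟨i.1, by have := Finset.mem_range.mp i.2; have := v.isLt; omega⟩ : Fin (m + 1))

theorem Nat.choose_mul_sub_eq_mul_choose_sub_one (n k : ℕ) :
    n.choose k * (n - k) = n * (n - 1).choose k := by
  cases n with
  | zero => simp
  | succ n => rw [Nat.add_sub_cancel, mul_comm (n + 1), ← Nat.choose_mul_succ_eq]

theorem Finset.sum_attach_range_eq_sum_fin {M : Type*} [AddCommMonoid M] {m : ℕ}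
    (v : Fin (m + 1)) (g : Fin (m + 1) → M) (hg : ∀ j, v < j → g j = 0) :
    ∑ i ∈ (Finset.range ((v : ℕ) + 1)).attach,
      g ⟨i.1, by have := Finset.mem_range.mp i.2; have := v.isLt; omega⟩ = ∑ j, g j := by
  rw [← Finset.sum_subset (Finset.subset_univ (Finset.Iic v))
    fun j _ hj => hg j (by simpa using hj)]
  refine Finset.sum_bij (fun i _ => ⟨i.1, _⟩) (fun i _ => ?_) (fun i _ j _ hij => ?_)
    (fun j hj => ?_) fun _ _ => rfl
  · exact Finset.mem_Iic.2 (Fin.mk_le_mk.2 (Nat.lt_succ_iff.1 (Finset.mem_range.1 i.2)))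
  · exact Subtype.ext (congrArg Fin.val hij)
  · exact ⟨⟨j, Finset.mem_range.2 (Nat.lt_succ_of_le (Fin.le_def.1 (Finset.mem_Iic.1 hj)))⟩,
      Finset.mem_attach _ _, rfl⟩

section BinomialLift

variable {R : Type*} [CommSemiring R] (m : ℕ)

def IsBasicWeitzenbock
    (D : Derivation R (MvPolynomial (Fin (m + 1)) R) (MvPolynomial (Fin (m + 1)) R)) : Prop :=
  ∀ v : Fin (m + 1),
    D (X v) = (v : ℕ) • X (⟨(v : ℕ) - 1, (Nat.sub_le _ _).trans_lt v.isLt⟩ : Fin (m + 1))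

/-- `φ_μ` with `μ` replaced by a formal variable `T`. -/
noncomputable def binomialLift :
    MvPolynomial (Fin (m + 1)) R →ₐ[R] Polynomial (MvPolynomial (Fin (m + 1)) R) :=
  aeval fun v => ∑ j : Fin (m + 1),
    Polynomial.monomial ((v : ℕ) - j) (((v : ℕ).choose j : MvPolynomial (Fin (m + 1)) R) * X j)

theorem binomialLift_X (v : Fin (m + 1)) :
    binomialLift m (X v : MvPolynomial (Fin (m + 1)) R) =
      ∑ j : Fin (m + 1), Polynomial.monomial ((v : ℕ) - j)
        (((v : ℕ).choose j : MvPolynomial (Fin (m + 1)) R) * X j) :=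
  aeval_X _ _

theorem binomialLift_C (a : R) : binomialLift m (C a) = Polynomial.C (C a) :=
  (binomialLift m).commutes a

theorem eval_zero_binomialLift (f : MvPolynomial (Fin (m + 1)) R) :
    (binomialLift m f).eval 0 = f := by
  induction f using MvPolynomial.induction_on with
  | C a => rw [binomialLift_C, Polynomial.eval_C]
  | add p q hp hq => rw [map_add, Polynomial.eval_add, hp, hq]
  | mul_X p v hp =>
    rw [map_mul, Polynomial.eval_mul, hp, binomialLift_X, Polynomial.eval_finsetSum,
      Finset.sum_eq_single v]
    · simp
    · intro j _ hj
      rcases lt_or_gt_of_ne hj with hlt | hgt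
      · rw [Polynomial.eval_monomial, zero_pow (by omega), mul_zero]
      · rw [Polynomial.eval_monomial, Nat.choose_eq_zero_of_lt hgt]; simp
    · simp

variable {m} {D : Derivation R (MvPolynomial (Fin (m + 1)) R) (MvPolynomial (Fin (m + 1)) R)}
  (hD : IsBasicWeitzenbock m D)
include hD

theorem derivative_binomialLift_X (v : Fin (m + 1)) :
    Polynomial.derivative (binomialLift m (X v)) = binomialLift m (D (X v)) := by
  rw [hD, map_nsmul, binomialLift_X, binomialLift_X, map_sum, Finset.smul_sum]
  refine Finset.sum_congr rfl fun j _ => ?_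
  rw [Polynomial.derivative_monomial, ← map_nsmul, Nat.sub_right_comm]
  congr 1
  rw [nsmul_eq_mul, ← mul_assoc, mul_right_comm, ← Nat.cast_mul, ← Nat.cast_mul,
    Nat.choose_mul_sub_eq_mul_choose_sub_one]

theorem derivative_binomialLift (f : MvPolynomial (Fin (m + 1)) R) :
    Polynomial.derivative (binomialLift m f) = binomialLift m (D f) := by
  induction f using MvPolynomial.induction_on with
  | C a =>
    rw [binomialLift_C, Polynomial.derivative_C, ← algebraMap_eq, D.map_algebraMap, map_zero]
  | add p q hp hq => rw [map_add, Polynomial.derivative_add, hp, hq, map_add, map_add]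
  | mul_X p v hp =>
    rw [map_mul, Polynomial.derivative_mul, hp, derivative_binomialLift_X hD, D.leibniz,
      smul_eq_mul, smul_eq_mul, map_add, map_mul, map_mul]
    ring

end BinomialLift

theorem binomialLift_eq_C_iff {R : Type*} [CommRing R] [IsDomain R] [CharZero R] {m : ℕ}
    {D : Derivation R (MvPolynomial (Fin (m + 1)) R) (MvPolynomial (Fin (m + 1)) R)}
    (hD : IsBasicWeitzenbock m D) (f : MvPolynomial (Fin (m + 1)) R) :
    binomialLift m f = Polynomial.C f ↔ D f = 0 := by
  constructor
  · intro hf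
    rw [← eval_zero_binomialLift m (D f), ← derivative_binomialLift hD, hf,
      Polynomial.derivative_C, Polynomial.eval_zero]
  · intro hf
    have hconst := Polynomial.eq_C_of_derivative_eq_zero
      (by rw [derivative_binomialLift hD, hf, map_zero])
    rwa [Polynomial.coeff_zero_eq_eval_zero, eval_zero_binomialLift] at hconst

section Rational

variable {m : ℕ}

theorem binomialSubst_eq_eval_binomialLift (μ : ℚ) (f : MvPolynomial (Fin (m + 1)) ℚ) :
    binomialSubst m μ f = (binomialLift m f).eval (C μ) := by
  suffices binomialSubst m μ =
      ((Polynomial.aeval (C μ)).restrictScalars ℚ).comp (binomialLift m) from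
    DFunLike.congr_fun this f
  refine MvPolynomial.algHom_ext fun v => ?_
  rw [binomialSubst, aeval_X, AlgHom.comp_apply, binomialLift_X, AlgHom.restrictScalars_apply,
    map_sum]
  refine (Finset.sum_attach_range_eq_sum_fin v
    (fun j => (((v : ℕ).choose j : ℚ) * μ ^ ((v : ℕ) - j)) • X j) fun j hj => ?_).trans
    (Finset.sum_congr rfl fun j _ => ?_)
  · rw [Nat.choose_eq_zero_of_lt hj]; simp
  · rw [Polynomial.aeval_monomial, smul_eq_C_mul, map_mul, map_pow, map_natCast]
    simp only [Algebra.algebraMap_self, RingHom.id_apply]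
    ring

theorem binomialSubst_invariant_iff_binomialLift_eq_C (f : MvPolynomial (Fin (m + 1)) ℚ) :
    (∀ μ : ℚ, binomialSubst m μ f = f) ↔ binomialLift m f = Polynomial.C f := by
  simp_rw [binomialSubst_eq_eval_binomialLift]
  refine ⟨fun h => Polynomial.eq_of_infinite_eval_eq _ _ ?_,
    fun h μ => by rw [h, Polynomial.eval_C]⟩
  exact Set.infinite_of_injective_forall_mem (C_injective _ _) fun μ => by simp [h μ]

end Rational

theorem binomialSubst_invariant_iff_weitzenbock (m : ℕ)
    (D : Derivation ℚ (MvPolynomial (Fin (m + 1)) ℚ) (MvPolynomial (Fin (m + 1)) ℚ))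
    (h0 : D (X (⟨0, by omega⟩ : Fin (m + 1))) = 0)
    (h : ∀ i : Fin (m + 1), 1 ≤ (i : ℕ) →
      D (X i) = ((i : ℕ) : ℚ) • X (⟨(i : ℕ) - 1, by have := i.isLt; omega⟩ : Fin (m + 1)))
    (f : MvPolynomial (Fin (m + 1)) ℚ) :
    (∀ μ : ℚ, binomialSubst m μ f = f) ↔ D f = 0 := by
  have hD : IsBasicWeitzenbock m D := by
    rintro ⟨_ | i, hi⟩
    · simpa using h0
    · rw [h _ (Nat.le_add_left 1 i), Nat.cast_smul_eq_nsmul]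
  exact (binomialSubst_invariant_iff_binomialLift_eq_C f).trans (binomialLift_eq_C_iff hD f)
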